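/- arXiv:2003.03924 — 3 statements merged into one kernel-verified Lean document; each statement's English description precedes it below -/
import Mathlib

section
/- For any policy π and any function Q : S × A → ℝ, the difference between the expected value E_{s∼d₀}[Q(s,π)] and the return J(π) equals (1/(1-γ)) · E_{(s,a)∼d_π, s'∼P(·|s,a)}[Q(s,a) − R(s,a) − γ Q(s',π)], where Q(s,π) := Σ_a π(a|s) Q(s,a). -/
open scoped BigOperators

/-- Time-`t` state-action marginal distribution of a policy in a finite MDP. -/
noncomputable def marg {S A : Type*} [Fintype S] [Fintype A]
    (d0 : S → ℝ) (P : S → A → S → ℝ) (pol : S → A → ℝ) : ℕ → S → A → ℝ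
  | 0 => fun s a => d0 s * pol s a
  | (t + 1) => fun s' a' => (∑ s, ∑ a, marg d0 P pol t s a * P s a s') * pol s' a'

/-- Normalized discounted state-action occupancy `d_π(s,a)`. -/
noncomputable def occ {S A : Type*} [Fintype S] [Fintype A]
    (γ : ℝ) (d0 : S → ℝ) (P : S → A → S → ℝ) (pol : S → A → ℝ) (s : S) (a : A) : ℝ :=
  (1 - γ) * ∑' t : ℕ, γ ^ t * marg d0 P pol t s a

/-- Expected discounted return `J(π)`. -/
noncomputable def Jret {S A : Type*} [Fintype S] [Fintype A]
    (γ : ℝ) (d0 : S → ℝ) (P : S → A → S → ℝ) (R : S → A → ℝ) (pol : S → A → ℝ) : ℝ :=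
  ∑' t : ℕ, γ ^ t * ∑ s, ∑ a, marg d0 P pol t s a * R s a

/-- Bellman optimality operator `(T Q)(s,a) = R(s,a) + γ Σ_{s'} P(s'|s,a) max_{a'} Q(s',a')`. -/
noncomputable def bellmanT {S A : Type*} [Fintype S] [Fintype A] [Nonempty A]
    (γ : ℝ) (P : S → A → S → ℝ) (R : S → A → ℝ) (Q : S → A → ℝ) (s : S) (a : A) : ℝ :=
  R s a + γ * ∑ s', P s a s' * (⨆ a', Q s' a')

/-- A deterministic policy viewed as a stochastic policy. -/
noncomputable def detPol {S A : Type*} [DecidableEq A] (g : S → A) : S → A → ℝ :=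
  fun s a => if a = g s then 1 else 0
section aux
variable {S A : Type*} [Fintype S] [Fintype A]
  (d0 : S → ℝ) (P : S → A → S → ℝ) (pol : S → A → ℝ)

lemma marg_nonneg (hd0 : ∀ s, 0 ≤ d0 s) (hP : ∀ s a s', 0 ≤ P s a s')
    (hpol : ∀ s a, 0 ≤ pol s a) : ∀ t s a, 0 ≤ marg d0 P pol t s a := by
  intro t
  induction t with
  | zero => intro s a; exact mul_nonneg (hd0 s) (hpol s a)
  | succ t ih =>
    intro s' a'
    exact mul_nonneg (Finset.sum_nonneg fun s _ => Finset.sum_nonneg fun a _ =>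
      mul_nonneg (ih s a) (hP s a s')) (hpol s' a')

lemma marg_sum (hd0sum : ∑ s, d0 s = 1) (hPsum : ∀ s a, ∑ s', P s a s' = 1)
    (hpolsum : ∀ s, ∑ a, pol s a = 1) :
    ∀ t, ∑ s, ∑ a, marg d0 P pol t s a = 1 := by
  intro t
  induction t with
  | zero =>
    simp only [marg, ← Finset.mul_sum]
    simp [hpolsum, hd0sum]
  | succ t ih =>
    simp only [marg, ← Finset.mul_sum, hpolsum, mul_one]
    rw [Finset.sum_comm]
    have h : ∀ s, ∑ s', ∑ a, marg d0 P pol t s a * P s a s'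
        = ∑ a, marg d0 P pol t s a := by
      intro s
      rw [Finset.sum_comm]
      exact Finset.sum_congr rfl fun a _ => by rw [← Finset.mul_sum, hPsum, mul_one]
    -- current goal shape: ∑ s, ∑ s', ∑ a, ...
    calc ∑ s, ∑ s', ∑ a, marg d0 P pol t s a * P s a s'
        = ∑ s, ∑ a, marg d0 P pol t s a := Finset.sum_congr rfl fun s _ => h s
      _ = 1 := ih

lemma sum4_comm {M : Type*} [AddCommMonoid M] (f : S → A → S → A → M) :
    ∑ s', ∑ a', ∑ s, ∑ a, f s a s' a' = ∑ s, ∑ a, ∑ s', ∑ a', f s a s' a' := by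
  calc ∑ s', ∑ a', ∑ s, ∑ a, f s a s' a'
      = ∑ s', ∑ s, ∑ a', ∑ a, f s a s' a' :=
        Finset.sum_congr rfl fun s' _ => Finset.sum_comm
    _ = ∑ s, ∑ s', ∑ a', ∑ a, f s a s' a' := Finset.sum_comm
    _ = ∑ s, ∑ s', ∑ a, ∑ a', f s a s' a' :=
        Finset.sum_congr rfl fun s _ => Finset.sum_congr rfl fun s' _ => Finset.sum_comm
    _ = ∑ s, ∑ a, ∑ s', ∑ a', f s a s' a' :=
        Finset.sum_congr rfl fun s _ => Finset.sum_comm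

lemma marg_step (F : S → A → ℝ) (t : ℕ) :
    ∑ s', ∑ a', marg d0 P pol (t+1) s' a' * F s' a'
      = ∑ s, ∑ a, marg d0 P pol t s a * ∑ s', P s a s' * ∑ a', pol s' a' * F s' a' := by
  calc ∑ s', ∑ a', marg d0 P pol (t+1) s' a' * F s' a'
      = ∑ s', ∑ a', ∑ s, ∑ a,
          marg d0 P pol t s a * (P s a s' * (pol s' a' * F s' a')) := by
        refine Finset.sum_congr rfl fun s' _ => Finset.sum_congr rfl fun a' _ => ?_
        simp only [marg, Finset.sum_mul]
        exact Finset.sum_congr rfl fun s _ => Finset.sum_congr rfl fun a _ => by ring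
    _ = ∑ s, ∑ a, ∑ s', ∑ a',
          marg d0 P pol t s a * (P s a s' * (pol s' a' * F s' a')) := sum4_comm _
    _ = ∑ s, ∑ a, marg d0 P pol t s a * ∑ s', P s a s' * ∑ a', pol s' a' * F s' a' := by
        refine Finset.sum_congr rfl fun s _ => Finset.sum_congr rfl fun a _ => ?_
        rw [Finset.mul_sum]
        refine Finset.sum_congr rfl fun s' _ => ?_
        rw [Finset.mul_sum, Finset.mul_sum]
end aux

set_option maxHeartbeats 1000000 in
/-- Evaluation-error (telescoping) lemma: `E_{d₀}[Q(s,π)] - J(π)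
    = (1/(1-γ)) E_{d_π}[Q(s,a) - R(s,a) - γ E_{s'}[Q(s',π)]]`. -/
theorem stmt0 {S A : Type*} [Fintype S] [Fintype A]
    (γ : ℝ) (hγ0 : 0 ≤ γ) (hγ1 : γ < 1)
    (d0 : S → ℝ) (hd0 : ∀ s, 0 ≤ d0 s) (hd0sum : ∑ s, d0 s = 1)
    (P : S → A → S → ℝ) (hP : ∀ s a s', 0 ≤ P s a s') (hPsum : ∀ s a, ∑ s', P s a s' = 1)
    (R : S → A → ℝ)
    (pol : S → A → ℝ) (hpol : ∀ s a, 0 ≤ pol s a) (hpolsum : ∀ s, ∑ a, pol s a = 1)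
    (Q : S → A → ℝ) :
    (∑ s, d0 s * ∑ a, pol s a * Q s a) - Jret γ d0 P R pol
      = (1 / (1 - γ)) *
        ∑ s, ∑ a, occ γ d0 P pol s a *
          (Q s a - R s a - γ * ∑ s', P s a s' * ∑ a', pol s' a' * Q s' a') := by
  have hm0 := marg_nonneg d0 P pol hd0 hP hpol
  have hm1 := marg_sum d0 P pol hd0sum hPsum hpolsum
  have hmle : ∀ t s a, marg d0 P pol t s a ≤ 1 := by
    intro t s a
    calc marg d0 P pol t s a
        ≤ ∑ a, marg d0 P pol t s a :=
          Finset.single_le_sum (fun a _ => hm0 t s a) (Finset.mem_univ a)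
      _ ≤ ∑ s, ∑ a, marg d0 P pol t s a :=
          Finset.single_le_sum
            (fun s _ => Finset.sum_nonneg fun a _ => hm0 t s a) (Finset.mem_univ s)
      _ = 1 := hm1 t
  have hgeo : Summable fun t : ℕ => γ ^ t := summable_geometric_of_lt_one hγ0 hγ1
  have hsum1 : ∀ s a, Summable fun t => γ ^ t * marg d0 P pol t s a := by
    intro s a
    refine Summable.of_nonneg_of_le
      (fun t => mul_nonneg (pow_nonneg hγ0 t) (hm0 t s a)) (fun t => ?_) hgeo
    calc γ ^ t * marg d0 P pol t s a ≤ γ ^ t * 1 :=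
          mul_le_mul_of_nonneg_left (hmle t s a) (pow_nonneg hγ0 t)
      _ = γ ^ t := mul_one _
  -- summability of weighted series for arbitrary F
  have hsumF : ∀ F : S → A → ℝ,
      Summable fun t => γ ^ t * ∑ s, ∑ a, marg d0 P pol t s a * F s a := by
    intro F
    have hrep : (fun t => γ ^ t * ∑ s, ∑ a, marg d0 P pol t s a * F s a)
        = fun t => ∑ s, ∑ a, γ ^ t * marg d0 P pol t s a * F s a := by
      funext t
      simp only [Finset.mul_sum]
      exact Finset.sum_congr rfl fun s _ => Finset.sum_congr rfl fun a _ => by ring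
    rw [hrep]
    exact summable_sum fun s _ => summable_sum fun a _ => (hsum1 s a).mul_right (F s a)
  set f : ℕ → ℝ := fun t => ∑ s, ∑ a, marg d0 P pol t s a * Q s a with hf
  set r : ℕ → ℝ := fun t => ∑ s, ∑ a, marg d0 P pol t s a * R s a with hr
  set G : S → A → ℝ := fun s a =>
    Q s a - R s a - γ * ∑ s', P s a s' * ∑ a', pol s' a' * Q s' a' with hG
  have hfs : Summable fun t => γ ^ t * f t := hsumF Q
  have hrs : Summable fun t => γ ^ t * r t := hsumF R
  have hshift : Summable fun t => γ ^ (t + 1) * f (t + 1) :=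
    (summable_nat_add_iff 1).2 hfs
  have hγne : (1 : ℝ) - γ ≠ 0 := by linarith
  have key : (∑ s, ∑ a, occ γ d0 P pol s a * G s a)
      = (1 - γ) * ∑' t, γ ^ t * ∑ s, ∑ a, marg d0 P pol t s a * G s a := by
    have h1 : ∀ s a, occ γ d0 P pol s a * G s a
        = (1 - γ) * ∑' t, γ ^ t * marg d0 P pol t s a * G s a := by
      intro s a
      rw [occ, mul_assoc, ← tsum_mul_right]
    simp only [h1, ← Finset.mul_sum]
    congr 1
    calc ∑ s, ∑ a, ∑' t, γ ^ t * marg d0 P pol t s a * G s a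
        = ∑ s, ∑' t, ∑ a, γ ^ t * marg d0 P pol t s a * G s a := by
          exact Finset.sum_congr rfl fun s _ =>
            (Summable.tsum_finsetSum fun a _ => (hsum1 s a).mul_right (G s a)).symm
      _ = ∑' t, ∑ s, ∑ a, γ ^ t * marg d0 P pol t s a * G s a := by
          exact (Summable.tsum_finsetSum fun s _ => summable_sum fun a _ =>
            (hsum1 s a).mul_right (G s a)).symm
      _ = ∑' t, γ ^ t * ∑ s, ∑ a, marg d0 P pol t s a * G s a := by
          refine tsum_congr fun t => ?_
          simp only [Finset.mul_sum]
          exact Finset.sum_congr rfl fun s _ =>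
            Finset.sum_congr rfl fun a _ => by ring
  have hstep : ∀ t, (∑ s, ∑ a, marg d0 P pol t s a * G s a)
      = f t - r t - γ * f (t + 1) := by
    intro t
    have e1 : ∀ s a, marg d0 P pol t s a * G s a
        = marg d0 P pol t s a * Q s a - marg d0 P pol t s a * R s a
          - γ * (marg d0 P pol t s a *
              (∑ s', P s a s' * ∑ a', pol s' a' * Q s' a')) := by
      intro s a; simp only [hG]; ring
    simp only [e1, Finset.sum_sub_distrib, ← Finset.mul_sum]
    simp only [hf, hr]
    rw [marg_step d0 P pol Q t]
  have hJ : Jret γ d0 P R pol = ∑' t, γ ^ t * r t := by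
    simp only [hr]; rfl
  have hser : (∑' t, γ ^ t * ∑ s, ∑ a, marg d0 P pol t s a * G s a)
      = f 0 - Jret γ d0 P R pol := by
    have hterm : ∀ t, γ ^ t * ∑ s, ∑ a, marg d0 P pol t s a * G s a
        = γ ^ t * f t - γ ^ t * r t - γ ^ (t + 1) * f (t + 1) := by
      intro t; rw [hstep t]; ring
    have hz := Summable.tsum_eq_zero_add hfs
    have h0 : (∑' t, γ ^ (t + 1) * f (t + 1))
        = (∑' t, γ ^ t * f t) - γ ^ 0 * f 0 := by
      rw [hz]; ring
    calc (∑' t, γ ^ t * ∑ s, ∑ a, marg d0 P pol t s a * G s a)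
        = ∑' t, (γ ^ t * f t - γ ^ t * r t - γ ^ (t + 1) * f (t + 1)) :=
          tsum_congr hterm
      _ = (∑' t, γ ^ t * f t) - (∑' t, γ ^ t * r t)
          - ∑' t, γ ^ (t + 1) * f (t + 1) := by
          rw [Summable.tsum_sub (hfs.sub hrs) hshift, Summable.tsum_sub hfs hrs]
      _ = f 0 - Jret γ d0 P R pol := by rw [h0, hJ]; ring
  rw [key, hser, ← mul_assoc, one_div, inv_mul_cancel₀ hγne, one_mul]
  congr 1
  simp only [hf, marg]
  exact Finset.sum_congr rfl fun s _ => by rw [Finset.mul_sum]; exact Finset.sum_congr rfl fun a _ => by ring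
end

section
/- Telescoping performance difference: for any policy π and any function Q : S × A → ℝ, letting π_Q be the greedy policy of Q, J(π) − J(π_Q) ≤ (1/(1-γ)) · E_{d_π}[TQ − Q] + (1/(1-γ)) · E_{d_{π_Q}}[Q − TQ]. -/
/-!
The time-`(t+1)` marginal of a policy is its time-`t` marginal pushed through `P` and then
through the policy, so the discounted series defining the occupancy telescopes into the Bellman
flow equation `E_{d_π}[f - γ P(π·f)] = (1-γ) E_{d₀}[π·f]`, where `(π·f)(s) = Σ_a π(s,a) f(s,a)`.
Together with `E_{d_π}[R] = (1-γ) J(π)` this gives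
`E_{d_π}[R + γ P(π·Q) - Q] = (1-γ) (J(π) - E_{d₀}[π·Q])`.
With `V = max_a Q` we have `TQ = R + γ P V`; the greedy policy has `π_Q·Q = V`, which gives
`E_{d_{π_Q}}[TQ - Q] = (1-γ) (J(π_Q) - E_{d₀}[V])`, while `π·Q ≤ V` gives
`E_{d_π}[TQ - Q] ≥ (1-γ) (J(π) - E_{d₀}[V])`. Subtracting eliminates `E_{d₀}[V]`.
-/

open scoped BigOperators

namespace MDP

section Occupancy

variable {S A : Type*} [Fintype S] [Fintype A]
  {γ : ℝ} {d0 : S → ℝ} {P : S → A → S → ℝ} {pol : S → A → ℝ}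

theorem marg_nonneg (hd0 : ∀ s, 0 ≤ d0 s) (hP : ∀ s a s', 0 ≤ P s a s')
    (hpol : ∀ s a, 0 ≤ pol s a) (t : ℕ) (s : S) (a : A) : 0 ≤ marg d0 P pol t s a := by
  induction t generalizing s a with
  | zero => exact mul_nonneg (hd0 s) (hpol s a)
  | succ t ih =>
    exact mul_nonneg (Finset.sum_nonneg fun s' _ => Finset.sum_nonneg fun a' _ =>
      mul_nonneg (ih s' a') (hP s' a' s)) (hpol s a)

theorem sum_marg_zero_mul (f : S → A → ℝ) :
    ∑ s, ∑ a, marg d0 P pol 0 s a * f s a = ∑ s, d0 s * ∑ a, pol s a * f s a := by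
  simp only [marg, Finset.mul_sum, mul_assoc]

theorem sum_marg_succ_mul (f : S → A → ℝ) (t : ℕ) :
    ∑ s, ∑ a, marg d0 P pol (t + 1) s a * f s a
      = ∑ s, ∑ a, marg d0 P pol t s a * ∑ s', P s a s' * ∑ a', pol s' a' * f s' a' := by
  simp only [marg, Finset.mul_sum, Finset.sum_mul, mul_assoc]
  calc _ = ∑ s', ∑ s, ∑ a, ∑ a', marg d0 P pol t s a * (P s a s' * (pol s' a' * f s' a')) := by
        refine Finset.sum_congr rfl fun s' _ => ?_
        rw [Finset.sum_comm]
        exact Finset.sum_congr rfl fun s _ => Finset.sum_comm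
    _ = _ := by
        rw [Finset.sum_comm]
        exact Finset.sum_congr rfl fun s _ => Finset.sum_comm

theorem sum_marg_eq_one (hd0sum : ∑ s, d0 s = 1) (hPsum : ∀ s a, ∑ s', P s a s' = 1)
    (hpolsum : ∀ s, ∑ a, pol s a = 1) (t : ℕ) : ∑ s, ∑ a, marg d0 P pol t s a = 1 := by
  induction t with
  | zero => simpa [hpolsum, hd0sum] using sum_marg_zero_mul (d0 := d0) (P := P) (pol := pol) fun _ _ => 1
  | succ t ih =>
    simpa [hpolsum, hPsum, ih] using sum_marg_succ_mul (d0 := d0) (P := P) (pol := pol) (fun _ _ => 1) t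

theorem abs_marg_le_one (hd0 : ∀ s, 0 ≤ d0 s) (hd0sum : ∑ s, d0 s = 1)
    (hP : ∀ s a s', 0 ≤ P s a s') (hPsum : ∀ s a, ∑ s', P s a s' = 1)
    (hpol : ∀ s a, 0 ≤ pol s a) (hpolsum : ∀ s, ∑ a, pol s a = 1)
    (t : ℕ) (s : S) (a : A) : |marg d0 P pol t s a| ≤ 1 := by
  have hnonneg := marg_nonneg hd0 hP hpol t
  rw [abs_of_nonneg (hnonneg s a), ← sum_marg_eq_one hd0sum hPsum hpolsum t]
  calc marg d0 P pol t s a ≤ ∑ a, marg d0 P pol t s a :=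
        Finset.single_le_sum (fun a _ => hnonneg s a) (Finset.mem_univ a)
    _ ≤ ∑ s, ∑ a, marg d0 P pol t s a :=
        Finset.single_le_sum (f := fun s => ∑ a, marg d0 P pol t s a)
          (fun s _ => Finset.sum_nonneg fun a _ => hnonneg s a) (Finset.mem_univ s)

theorem summable_geom_mul_marg (hγ0 : 0 ≤ γ) (hγ1 : γ < 1)
    (hmarg : ∀ t s a, |marg d0 P pol t s a| ≤ 1) (s : S) (a : A) :
    Summable fun t => γ ^ t * marg d0 P pol t s a := by
  refine (summable_geometric_of_lt_one hγ0 hγ1).of_norm_bounded fun t => ?_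
  rw [Real.norm_eq_abs, abs_mul, abs_pow, abs_of_nonneg hγ0]
  exact mul_le_of_le_one_right (pow_nonneg hγ0 t) (hmarg t s a)

theorem summable_geom_mul_sum_marg_mul (hγ0 : 0 ≤ γ) (hγ1 : γ < 1)
    (hmarg : ∀ t s a, |marg d0 P pol t s a| ≤ 1) (f : S → A → ℝ) :
    Summable fun t => γ ^ t * ∑ s, ∑ a, marg d0 P pol t s a * f s a := by
  simp only [Finset.mul_sum, ← mul_assoc]
  exact summable_sum fun s _ => summable_sum fun a _ =>
    (summable_geom_mul_marg hγ0 hγ1 hmarg s a).mul_right (f s a)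

theorem sum_occ_mul_eq_tsum (hγ0 : 0 ≤ γ) (hγ1 : γ < 1)
    (hmarg : ∀ t s a, |marg d0 P pol t s a| ≤ 1) (f : S → A → ℝ) :
    ∑ s, ∑ a, occ γ d0 P pol s a * f s a
      = (1 - γ) * ∑' t, γ ^ t * ∑ s, ∑ a, marg d0 P pol t s a * f s a := by
  have hsummable s a := (summable_geom_mul_marg hγ0 hγ1 hmarg s a).mul_right (f s a)
  have hentry s a : occ γ d0 P pol s a * f s a
      = (1 - γ) * ∑' t, γ ^ t * marg d0 P pol t s a * f s a := by
    rw [occ, mul_assoc, ← tsum_mul_right]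
  simp only [hentry, ← Finset.mul_sum, mul_assoc]
  congr 1
  simp only [← mul_assoc, Finset.mul_sum]
  rw [Summable.tsum_finsetSum fun s _ => summable_sum fun a _ => hsummable s a]
  refine Finset.sum_congr rfl fun s _ => ?_
  rw [Summable.tsum_finsetSum fun a _ => hsummable s a]

theorem occ_nonneg (hγ0 : 0 ≤ γ) (hγ1 : γ < 1) (hmarg : ∀ t s a, 0 ≤ marg d0 P pol t s a)
    (s : S) (a : A) : 0 ≤ occ γ d0 P pol s a :=
  mul_nonneg (sub_nonneg.2 hγ1.le)
    (tsum_nonneg fun t => mul_nonneg (pow_nonneg hγ0 t) (hmarg t s a))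

theorem sum_occ_mul_sub_discounted_next (hγ0 : 0 ≤ γ) (hγ1 : γ < 1)
    (hmarg : ∀ t s a, |marg d0 P pol t s a| ≤ 1) (f : S → A → ℝ) :
    ∑ s, ∑ a, occ γ d0 P pol s a * (f s a - γ * ∑ s', P s a s' * ∑ a', pol s' a' * f s' a')
      = (1 - γ) * ∑ s, d0 s * ∑ a, pol s a * f s a := by
  set E : ℕ → ℝ := fun t => γ ^ t * ∑ s, ∑ a, marg d0 P pol t s a * f s a with hE_def
  have hE : Summable E := summable_geom_mul_sum_marg_mul hγ0 hγ1 hmarg f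
  have hstep t : γ ^ t * ∑ s, ∑ a, marg d0 P pol t s a *
      (f s a - γ * ∑ s', P s a s' * ∑ a', pol s' a' * f s' a') = E t - E (t + 1) := by
    simp only [hE_def, sum_marg_succ_mul, pow_succ, mul_sub, Finset.sum_sub_distrib,
      mul_left_comm _ γ, ← Finset.mul_sum]
    ring
  rw [sum_occ_mul_eq_tsum hγ0 hγ1 hmarg]
  simp only [hstep]
  rw [hE.tsum_sub ((summable_nat_add_iff 1).2 hE), hE.tsum_eq_zero_add, hE_def]
  simp only [pow_zero, one_mul, sum_marg_zero_mul]
  ring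

theorem sum_occ_mul_bellman_residual_eq (hγ0 : 0 ≤ γ) (hγ1 : γ < 1)
    (hmarg : ∀ t s a, |marg d0 P pol t s a| ≤ 1) (R Q : S → A → ℝ) :
    ∑ s, ∑ a, occ γ d0 P pol s a *
        (R s a + γ * ∑ s', P s a s' * ∑ a', pol s' a' * Q s' a' - Q s a)
      = (1 - γ) * (Jret γ d0 P R pol - ∑ s, d0 s * ∑ a, pol s a * Q s a) := by
  calc _ = ∑ s, ∑ a, occ γ d0 P pol s a * R s a - ∑ s, ∑ a, occ γ d0 P pol s a *
          (Q s a - γ * ∑ s', P s a s' * ∑ a', pol s' a' * Q s' a') := by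
        simp only [← Finset.sum_sub_distrib]
        exact Finset.sum_congr rfl fun s _ => Finset.sum_congr rfl fun a _ => by ring
    _ = _ := by
        rw [sum_occ_mul_eq_tsum hγ0 hγ1 hmarg R, sum_occ_mul_sub_discounted_next hγ0 hγ1 hmarg,
          Jret]
        ring

theorem sum_occ_mul_bellman_residual_ge (hγ0 : 0 ≤ γ) (hγ1 : γ < 1)
    (hd0 : ∀ s, 0 ≤ d0 s) (hP : ∀ s a s', 0 ≤ P s a s')
    (hmarg : ∀ t s a, |marg d0 P pol t s a| ≤ 1) (hocc : ∀ s a, 0 ≤ occ γ d0 P pol s a)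
    (R Q : S → A → ℝ) (V : S → ℝ) (hV : ∀ s, ∑ a, pol s a * Q s a ≤ V s) :
    (1 - γ) * (Jret γ d0 P R pol - ∑ s, d0 s * V s)
      ≤ ∑ s, ∑ a, occ γ d0 P pol s a * (R s a + γ * ∑ s', P s a s' * V s' - Q s a) := by
  calc _ ≤ (1 - γ) * (Jret γ d0 P R pol - ∑ s, d0 s * ∑ a, pol s a * Q s a) := by
        gcongr with s
        · exact hd0 s
        · exact hV s
    _ = _ := (sum_occ_mul_bellman_residual_eq hγ0 hγ1 hmarg R Q).symm
    _ ≤ _ := by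
        gcongr with s _ a _ s' _
        · exact hocc s a
        · exact hP s a s'
        · exact hV s'

end Occupancy

section DeterministicPolicy

variable {S A : Type*} [DecidableEq A]

theorem detPol_nonneg (g : S → A) (s : S) (a : A) : 0 ≤ detPol g s a := by
  unfold detPol
  split_ifs <;> norm_num

theorem sum_detPol_mul [Fintype A] (g : S → A) (s : S) (f : A → ℝ) :
    ∑ a, detPol g s a * f a = f (g s) := by
  simp [detPol]

theorem sum_detPol [Fintype A] (g : S → A) (s : S) : ∑ a, detPol g s a = 1 := by
  simpa using sum_detPol_mul g s fun _ => 1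

end DeterministicPolicy

end MDP

open MDP

/-- Telescoping performance difference:
    `J(π) - J(π_Q) ≤ E_{d_π}[TQ - Q]/(1-γ) + E_{d_{π_Q}}[Q - TQ]/(1-γ)`. -/
theorem stmt3 {S A : Type*} [Fintype S] [Fintype A] [Nonempty A] [DecidableEq A]
    (γ : ℝ) (hγ0 : 0 ≤ γ) (hγ1 : γ < 1)
    (d0 : S → ℝ) (hd0 : ∀ s, 0 ≤ d0 s) (hd0sum : ∑ s, d0 s = 1)
    (P : S → A → S → ℝ) (hP : ∀ s a s', 0 ≤ P s a s') (hPsum : ∀ s a, ∑ s', P s a s' = 1)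
    (R : S → A → ℝ)
    (pol : S → A → ℝ) (hpol : ∀ s a, 0 ≤ pol s a) (hpolsum : ∀ s, ∑ a, pol s a = 1)
    (Q : S → A → ℝ) (g : S → A) (hg : ∀ s a, Q s a ≤ Q s (g s)) :
    Jret γ d0 P R pol - Jret γ d0 P R (detPol g)
      ≤ (1 / (1 - γ)) * (∑ s, ∑ a, occ γ d0 P pol s a * (bellmanT γ P R Q s a - Q s a))
        + (1 / (1 - γ)) *
          (∑ s, ∑ a, occ γ d0 P (detPol g) s a * (Q s a - bellmanT γ P R Q s a)) := by
  set V : S → ℝ := fun s => ⨆ a, Q s a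
  have hV_greedy s : Q s (g s) = V s :=
    le_antisymm (le_ciSup (Finite.bddAbove_range _) (g s)) (ciSup_le (hg s))
  have hV_pol s : ∑ a, pol s a * Q s a ≤ V s := by
    calc _ ≤ ∑ a, pol s a * Q s (g s) := by gcongr with a; exacts [hpol s a, hg s a]
      _ = V s := by rw [← Finset.sum_mul, hpolsum, one_mul, hV_greedy]
  have hT s a : bellmanT γ P R Q s a = R s a + γ * ∑ s', P s a s' * V s' := rfl
  have hmarg_pol := abs_marg_le_one hd0 hd0sum hP hPsum hpol hpolsum
  have hmarg_greedy := abs_marg_le_one hd0 hd0sum hP hPsum (detPol_nonneg g) (sum_detPol g)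
  have hpol_bound := sum_occ_mul_bellman_residual_ge hγ0 hγ1 hd0 hP hmarg_pol
    (occ_nonneg hγ0 hγ1 (marg_nonneg hd0 hP hpol)) R Q V hV_pol
  have hgreedy_eq := sum_occ_mul_bellman_residual_eq hγ0 hγ1 hmarg_greedy R Q
  simp only [sum_detPol_mul, hV_greedy] at hgreedy_eq
  have hneg : ∑ s, ∑ a, occ γ d0 P (detPol g) s a * (Q s a - bellmanT γ P R Q s a)
      = -∑ s, ∑ a, occ γ d0 P (detPol g) s a * (bellmanT γ P R Q s a - Q s a) := by
    simp only [← Finset.sum_neg_distrib, ← mul_neg, neg_sub]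
  rw [hneg]
  simp only [hT, hgreedy_eq, ← mul_add, one_div]
  rw [← div_eq_inv_mul, le_div_iff₀ (sub_pos.2 hγ1)]
  linarith
end

section
/- Deterministic chain example showing per-step concentrability is loose: in the MDP with states s₀,…,s_L, one action, deterministic transitions s_l → s_{l+1} for l < L and s_L absorbing, initial state s₀, and data distribution μ = d_π for the unique policy π, the occupancy-based coefficient satisfies ‖w_π‖_∞ = 1, while the per-step coefficients C_t := ‖d_{π,t}/μ‖_∞ satisfy C_t = 1/((1-γ)γ^t) for t < L and C_t = 1/γ^L for t ≥ L; hence if γ^L ≤ 1-γ then C_t ≥ 1/(1-γ) for all t, so any convex combination Σ_t β(t) C_t (with β(t) ≥ 0, Σβ(t)=1) is at least 1/(1-γ). -/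
open scoped BigOperators

/-! In the chain the policy reaches `s_{min t L}` at time `t` with certainty, so `d_{π,t}` is a
point mass and `C_t = 1/μ(s_{min t L})`. The early states carry only the mass `(1-γ)γ^l` of a
single visit, and the absorbing state only `γ^L`, so once `γ^L ≤ 1-γ` every `C_t` is at least
`1/(1-γ)`, whereas `w_π ≡ 1` because `μ = d_π`. -/

open Finset

theorem marg_deterministic {S : Type*} [Fintype S] [DecidableEq S] (f : S → S) (s₀ : S)
    (t : ℕ) (s : S) :
    marg (fun s => if s = s₀ then 1 else 0) (fun l (_ : Unit) l' => if l' = f l then 1 else 0)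
      (fun _ _ => 1) t s () = if s = f^[t] s₀ then 1 else 0 := by
  induction t generalizing s with
  | zero => simp only [marg, mul_one]; rfl
  | succ t ih =>
    simp only [marg, ih, Fintype.univ_unit, sum_singleton, mul_one, ite_mul, one_mul, zero_mul,
      Function.iterate_succ_apply']
    rw [sum_eq_single (f^[t] s₀)]
    · simp
    · intro b _ hb; simp [hb]
    · simp

theorem iSup_ite_div_eq_one_div {S : Type*} [Finite S] [Nonempty S] [DecidableEq S] {w : S → ℝ}
    (hw : ∀ s, 0 < w s) (m : S) :
    (⨆ s, (if s = m then (1 : ℝ) else 0) / w s) = 1 / w m := by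
  refine le_antisymm (ciSup_le fun s => ?_) ?_
  · split_ifs with h
    · rw [h]
    · rw [zero_div]; exact (one_div_pos.2 (hw m)).le
  · simpa using le_ciSup (Set.finite_range fun s => (if s = m then (1 : ℝ) else 0) / w s).bddAbove m

theorem le_tsum_mul_of_forall_le {ι : Type*} {β C : ι → ℝ} {c : ℝ} (hβ : ∀ i, 0 ≤ β i)
    (hβ1 : ∑' i, β i = 1) (hc : ∀ i, c ≤ C i) (hC : BddAbove (Set.range C)) :
    c ≤ ∑' i, β i * C i := by
  have hβs : Summable β := by
    by_contra h
    simp [tsum_eq_zero_of_not_summable h] at hβ1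
  obtain ⟨B, hB⟩ := hC
  have hβC : Summable fun i => β i * C i := by
    refine (hβs.mul_right (max |c| |B|)).of_norm_bounded fun i => ?_
    rw [norm_mul, Real.norm_of_nonneg (hβ i)]
    refine mul_le_mul_of_nonneg_left (abs_le.2 ⟨?_, ?_⟩) (hβ i)
    · linarith [hc i, neg_abs_le c, le_max_left |c| |B|]
    · linarith [hB ⟨i, rfl⟩, le_abs_self B, le_max_right |c| |B|]
  calc c = ∑' i, β i * c := by rw [tsum_mul_right, hβ1, one_mul]
    _ ≤ ∑' i, β i * C i :=
      (hβs.mul_right c).tsum_le_tsum (fun i => mul_le_mul_of_nonneg_left (hc i) (hβ i)) hβC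

namespace Chain

def step (L : ℕ) (l : Fin (L + 1)) : Fin (L + 1) := ⟨min (l + 1) L, by omega⟩

def stateAt (L t : ℕ) : Fin (L + 1) := ⟨min t L, by omega⟩

/-- The occupancy `μ = d_π` of the chain. -/
noncomputable def weight (γ : ℝ) (L : ℕ) (l : Fin (L + 1)) : ℝ :=
  if (l : ℕ) = L then γ ^ L else (1 - γ) * γ ^ (l : ℕ)

theorem val_stateAt (L t : ℕ) : (stateAt L t : ℕ) = min t L := rfl

theorem iterate_step_zero (L t : ℕ) : (step L)^[t] 0 = stateAt L t := by
  induction t with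
  | zero => rfl
  | succ t ih =>
    rw [Function.iterate_succ_apply', ih]
    ext
    simp only [step, stateAt]
    omega

theorem one_sub_mul_tsum_eq_weight {γ : ℝ} (hγ0 : 0 ≤ γ) (hγ1 : γ < 1) (L : ℕ)
    (l : Fin (L + 1)) :
    (1 - γ) * ∑' t, γ ^ t * (if l = stateAt L t then 1 else 0) = weight γ L l := by
  unfold weight
  split_ifs with hl
  · set f : ℕ → ℝ := fun t => γ ^ t * (if l = stateAt L t then 1 else 0) with hf
    have hshift : ∀ i, f (i + L) = γ ^ L * γ ^ i := by
      intro i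
      simp only [hf, Fin.ext_iff, val_stateAt]
      rw [if_pos (by omega), mul_one, pow_add, mul_comm]
    have hhead : ∑ i ∈ range L, f i = 0 :=
      sum_eq_zero fun i hi => by
        simp only [hf, Fin.ext_iff, val_stateAt]
        rw [if_neg (by rw [mem_range] at hi; omega), mul_zero]
    have hsum : Summable fun i => f (i + L) := by
      simpa only [hshift] using (summable_geometric_of_lt_one hγ0 hγ1).mul_left (γ ^ L)
    rw [← hsum.sum_add_tsum_nat_add', hhead, zero_add]
    simp only [hshift, tsum_mul_left, tsum_geometric_of_lt_one hγ0 hγ1]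
    field_simp [(sub_pos.2 hγ1).ne']
  · rw [tsum_eq_single (l : ℕ)]
    · simp only [Fin.ext_iff, val_stateAt]
      rw [if_pos (by omega), mul_one]
    · intro t ht
      simp only [Fin.ext_iff, val_stateAt]
      rw [if_neg (by omega), mul_zero]

theorem weight_stateAt_of_lt {γ : ℝ} {L t : ℕ} (ht : t < L) :
    weight γ L (stateAt L t) = (1 - γ) * γ ^ t := by
  rw [weight, val_stateAt, if_neg (by omega), min_eq_left ht.le]

theorem weight_stateAt_of_le {γ : ℝ} {L t : ℕ} (ht : L ≤ t) :
    weight γ L (stateAt L t) = γ ^ L := by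
  rw [weight, val_stateAt, if_pos (by omega)]

theorem weight_pos {γ : ℝ} (hγ0 : 0 < γ) (hγ1 : γ < 1) {L : ℕ} (l : Fin (L + 1)) :
    0 < weight γ L l := by
  unfold weight
  split_ifs
  · positivity
  · exact mul_pos (sub_pos.2 hγ1) (pow_pos hγ0 _)

theorem weight_le_one_sub {γ : ℝ} (hγ0 : 0 < γ) (hγ1 : γ < 1) {L : ℕ} (hγL : γ ^ L ≤ 1 - γ)
    (l : Fin (L + 1)) : weight γ L l ≤ 1 - γ := by
  unfold weight
  split_ifs
  · exact hγL
  · exact mul_le_of_le_one_right (sub_pos.2 hγ1).le (pow_le_one₀ hγ0.le hγ1.le)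

end Chain

/-- Deterministic chain example: occupancy-based concentrability is `1`, whereas every
    per-step coefficient `C_t` is at least `1/(1-γ)` once `γ^L ≤ 1-γ`, so every convex
    combination of the `C_t` is at least `1/(1-γ)`. -/
theorem stmt9 (L : ℕ) (γ : ℝ) (hγ0 : 0 < γ) (hγ1 : γ < 1)
    (d0 : Fin (L + 1) → ℝ) (hd0 : d0 = fun s => if s = (0 : Fin (L + 1)) then 1 else 0)
    (P : Fin (L + 1) → Unit → Fin (L + 1) → ℝ)
    (hP : P = fun (l : Fin (L + 1)) (_ : Unit) (l' : Fin (L + 1)) =>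
      if (l' : ℕ) = min ((l : ℕ) + 1) L then (1 : ℝ) else 0)
    (pol : Fin (L + 1) → Unit → ℝ) (hpol : pol = fun _ _ => 1)
    (μ : Fin (L + 1) → ℝ) (hμ : μ = fun s => occ γ d0 P pol s ())
    (C : ℕ → ℝ) (hC : C = fun t => ⨆ s, marg d0 P pol t s () / μ s) :
    (⨆ s, |occ γ d0 P pol s () / μ s|) = 1
    ∧ (∀ t < L, C t = 1 / ((1 - γ) * γ ^ t))
    ∧ (∀ t, L ≤ t → C t = 1 / γ ^ L)
    ∧ (γ ^ L ≤ 1 - γ →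
        ∀ β : ℕ → ℝ, (∀ t, 0 ≤ β t) → (∑' t, β t) = 1 →
          1 / (1 - γ) ≤ ∑' t, β t * C t) := by
  have hPstep : P = fun l (_ : Unit) l' => if l' = Chain.step L l then 1 else 0 := by
    rw [hP]
    funext l _ l'
    simp only [Fin.ext_iff, Chain.step]
  have hmarg : ∀ t s, marg d0 P pol t s () = if s = Chain.stateAt L t then 1 else 0 := by
    intro t s
    rw [hd0, hPstep, hpol, marg_deterministic, Chain.iterate_step_zero]
  have hμw : μ = Chain.weight γ L := by
    funext s
    rw [hμ]
    unfold occ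
    simp only [hmarg]
    exact Chain.one_sub_mul_tsum_eq_weight hγ0.le hγ1 L s
  have hw := Chain.weight_pos hγ0 hγ1 (L := L)
  have hCw : ∀ t, C t = 1 / Chain.weight γ L (Chain.stateAt L t) := by
    intro t
    rw [hC]
    simp only [hmarg, hμw]
    exact iSup_ite_div_eq_one_div hw _
  refine ⟨?_, fun t ht => ?_, fun t ht => ?_, fun hγL β hβ hβ1 => ?_⟩
  · have hocc : ∀ s, occ γ d0 P pol s () = μ s := fun s => by rw [hμ]
    simp only [hocc, hμw, div_self (hw _).ne', abs_one, ciSup_const]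
  · rw [hCw, Chain.weight_stateAt_of_lt ht]
  · rw [hCw, Chain.weight_stateAt_of_le ht]
  · refine le_tsum_mul_of_forall_le hβ hβ1
      (fun t => hCw t ▸ one_div_le_one_div_of_le (hw _) (Chain.weight_le_one_sub hγ0 hγ1 hγL _)) ?_
    refine (Set.finite_range fun s => 1 / Chain.weight γ L s).bddAbove.mono ?_
    rintro _ ⟨t, rfl⟩
    exact ⟨_, (hCw t).symm⟩
end
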